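/- Let R be an Artinian ring with nilpotent Jacobson radical J (J^N = 0). If a ∈ GL(n,R) is congruent to the identity modulo J, then the semigroup ⟨a,D⟩ generated by a and the invertible diagonal matrices (products containing a) contains the identity matrix. -/
import Mathlib

/-- Membership in the semigroup `⟨a, D⟩`. -/
def MemSemigroupGen {n : ℕ} {R : Type*} [Ring R]
    (a b : (Matrix (Fin n) (Fin n) R)ˣ) : Prop :=
  ∃ L : List (Matrix (Fin n) (Fin n) R)ˣ,
    (∀ x ∈ L, x = a ∨ (x.val).IsDiag) ∧ a ∈ L ∧ L.prod = b

open Matrix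

section JPpart
variable {R : Type*} [Ring R] (J : Ideal R)

/-- Additive subgroup generated by products of `k` elements of `J`. -/
def JPow (k : ℕ) : AddSubgroup R :=
  AddSubgroup.closure {x | ∃ L : List R, (∀ y ∈ L, y ∈ J) ∧ L.length = k ∧ L.prod = x}

variable {J}

lemma mem_jpow_of_mem {x : R} (hx : x ∈ J) : x ∈ JPow J 1 :=
  AddSubgroup.subset_closure ⟨[x], by simp [hx]⟩

lemma jpow_smul {k : ℕ} (hk : 1 ≤ k) (r : R) {x : R} (hx : x ∈ JPow J k) :
    r * x ∈ JPow J k := by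
  refine AddSubgroup.closure_induction (p := fun y _ => r * y ∈ JPow J k) ?_ ?_ ?_ ?_ hx
  · rintro x ⟨L, hL, hlen, rfl⟩
    obtain ⟨y, tl, rfl⟩ : ∃ y tl, L = y :: tl := by
      cases L with
      | nil => simp at hlen; omega
      | cons y tl => exact ⟨y, tl, rfl⟩
    apply AddSubgroup.subset_closure
    refine ⟨(r * y) :: tl, ?_, by simpa using hlen, ?_⟩
    · intro z hz
      rcases List.mem_cons.1 hz with h | h
      · subst h
        simpa [smul_eq_mul] using J.smul_mem r (hL y (by simp))
      · exact hL z (by simp [h])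
    · simp [List.prod_cons, mul_assoc]
  · simpa using (JPow J k).zero_mem
  · intro x y _ _ h1 h2
    rw [mul_add]; exact (JPow J k).add_mem h1 h2
  · intro x _ h1
    rw [mul_neg]; exact (JPow J k).neg_mem h1

lemma jpow_mul {k l : ℕ} {x y : R} (hx : x ∈ JPow J k) (hy : y ∈ JPow J l) :
    x * y ∈ JPow J (k + l) := by
  refine AddSubgroup.closure_induction (p := fun x _ => x * y ∈ JPow J (k + l)) ?_ ?_ ?_ ?_ hx
  · rintro x ⟨L, hL, hlen, rfl⟩
    refine AddSubgroup.closure_induction (p := fun y _ => L.prod * y ∈ JPow J (k + l)) ?_ ?_ ?_ ?_ hy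
    · rintro y ⟨L', hL', hlen', rfl⟩
      apply AddSubgroup.subset_closure
      refine ⟨L ++ L', ?_, by simp [hlen, hlen'], by simp⟩
      intro z hz
      rcases List.mem_append.1 hz with h | h
      · exact hL z h
      · exact hL' z h
    · simpa using (JPow J (k + l)).zero_mem
    · intro a b _ _ h1 h2; rw [mul_add]; exact (JPow J (k+l)).add_mem h1 h2
    · intro a _ h1; rw [mul_neg]; exact (JPow J (k+l)).neg_mem h1
  · simpa using (JPow J (k + l)).zero_mem
  · intro a b _ _ h1 h2; rw [add_mul]; exact (JPow J (k+l)).add_mem h1 h2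
  · intro a _ h1; rw [neg_mul]; exact (JPow J (k+l)).neg_mem h1

lemma jpow_succ_le {m : ℕ} (hm : 1 ≤ m) : JPow J (m + 1) ≤ JPow J m := by
  rw [JPow, AddSubgroup.closure_le]
  rintro x ⟨L, hL, hlen, rfl⟩
  obtain ⟨y, tl, rfl⟩ : ∃ y tl, L = y :: tl := by
    cases L with
    | nil => simp at hlen
    | cons y tl => exact ⟨y, tl, rfl⟩
  rw [List.prod_cons]
  exact jpow_smul hm y (AddSubgroup.subset_closure ⟨tl, fun z hz => hL z (by simp [hz]), by simpa using hlen, rfl⟩)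

lemma jpow_le {k : ℕ} (hk : 1 ≤ k) : ∀ m, k ≤ m → JPow J m ≤ JPow J k := by
  intro m hkm
  induction m with
  | zero => omega
  | succ m ih =>
    rcases Nat.eq_or_lt_of_le hkm with h | h
    · rw [h]
    · exact le_trans (jpow_succ_le (by omega)) (ih (by omega))

lemma jpow_one_le : JPow J 1 ≤ J.toAddSubgroup := by
  rw [JPow, AddSubgroup.closure_le]
  rintro x ⟨L, hL, hlen, rfl⟩
  obtain ⟨y, rfl⟩ := List.length_eq_one_iff.1 hlen
  simpa using hL y (by simp)

lemma jpow_eq_zero {N : ℕ}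
    (hnil : ∀ L : List R, (∀ x ∈ L, x ∈ J) → L.length = N → L.prod = 0)
    {x : R} (hx : x ∈ JPow J N) : x = 0 := by
  have : JPow J N ≤ ⊥ := by
    rw [JPow, AddSubgroup.closure_le]
    rintro x ⟨L, hL, hlen, rfl⟩
    simpa using hnil L hL hlen
  simpa using this hx
end JPpart

section Mtx
variable {n : ℕ} {R : Type*} [Ring R]

/-- The unit given by a diagonal matrix of units. -/
def unitOfDiag (u : Fin n → Rˣ) : (Matrix (Fin n) (Fin n) R)ˣ where
  val := diagonal fun i => (u i : R)
  inv := diagonal fun i => ((u i)⁻¹ : Rˣ)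
  val_inv := by rw [diagonal_mul_diagonal]; simp
  inv_val := by rw [diagonal_mul_diagonal]; simp

lemma unitOfDiag_val (u : Fin n → Rˣ) :
    (unitOfDiag u).val = diagonal fun i => (u i : R) := rfl

lemma unitOfDiag_inv (u : Fin n → Rˣ) :
    (unitOfDiag u)⁻¹ = unitOfDiag (fun i => (u i)⁻¹) := by
  symm
  apply eq_inv_of_mul_eq_one_right
  apply Units.ext
  show (unitOfDiag u).val * (unitOfDiag fun i => (u i)⁻¹).val = 1
  rw [unitOfDiag, unitOfDiag]
  simp [diagonal_mul_diagonal]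

lemma unitOfDiag_isDiag (u : Fin n → Rˣ) : ((unitOfDiag u).val).IsDiag :=
  isDiag_diagonal _

lemma memSG_self (a : (Matrix (Fin n) (Fin n) R)ˣ) : MemSemigroupGen a a :=
  ⟨[a], by simp, by simp, by simp⟩

lemma memSG_mul {a b c : (Matrix (Fin n) (Fin n) R)ˣ}
    (hb : MemSemigroupGen a b) (hc : MemSemigroupGen a c) : MemSemigroupGen a (b * c) := by
  obtain ⟨L1, h1, ha1, rfl⟩ := hb
  obtain ⟨L2, h2, _, rfl⟩ := hc
  exact ⟨L1 ++ L2, fun x hx => (List.mem_append.1 hx).elim (h1 x) (h2 x),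
    List.mem_append.2 (Or.inl ha1), List.prod_append⟩

lemma memSG_diag_mul {a b : (Matrix (Fin n) (Fin n) R)ˣ} (d : (Matrix (Fin n) (Fin n) R)ˣ)
    (hd : (d.val).IsDiag) (hb : MemSemigroupGen a b) : MemSemigroupGen a (d * b) := by
  obtain ⟨L, h, haL, rfl⟩ := hb
  exact ⟨d :: L, fun x hx => (List.mem_cons.1 hx).elim (fun h' => Or.inr (h' ▸ hd)) (h x),
    List.mem_cons.2 (Or.inr haL), List.prod_cons⟩

lemma memSG_mul_diag {a b : (Matrix (Fin n) (Fin n) R)ˣ} (d : (Matrix (Fin n) (Fin n) R)ˣ)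
    (hd : (d.val).IsDiag) (hb : MemSemigroupGen a b) : MemSemigroupGen a (b * d) := by
  obtain ⟨L, h, haL, rfl⟩ := hb
  refine ⟨L ++ [d], fun x hx => ?_, List.mem_append.2 (Or.inl haL), by simp⟩
  rcases List.mem_append.1 hx with h' | h'
  · exact h x h'
  · simp at h'; exact Or.inr (h' ▸ hd)

lemma memSG_list_prod (a : (Matrix (Fin n) (Fin n) R)ˣ) :
    ∀ L : List (Matrix (Fin n) (Fin n) R)ˣ, L ≠ [] → (∀ x ∈ L, MemSemigroupGen a x) →
      MemSemigroupGen a L.prod := by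
  intro L
  induction L with
  | nil => intro h; exact absurd rfl h
  | cons x xs ih =>
    intro _ h
    cases xs with
    | nil => simpa using h x (by simp)
    | cons y ys =>
      rw [List.prod_cons]
      exact memSG_mul (h x (by simp)) (ih (by simp) (fun z hz => h z (by simp [hz])))

lemma units_val_list_prod (L : List (Matrix (Fin n) (Fin n) R)ˣ) :
    (L.prod).val = (L.map Units.val).prod := by
  induction L with
  | nil => simp
  | cons x xs ih => simp [ih]

lemma list_sum_apply (i j : Fin n) :
    ∀ L : List (Matrix (Fin n) (Fin n) R), L.sum i j = (L.map (fun m => m i j)).sum := by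
  intro L
  induction L with
  | nil => simp
  | cons x xs ih => simp [Matrix.add_apply, ih]

end Mtx

section Sign
variable {n : ℕ}

def sg (R : Type*) [Ring R] (s : Fin n → Bool) (i : Fin n) : R := if s i then -1 else 1

lemma sg_def (R : Type*) [Ring R] (s : Fin n → Bool) (i : Fin n) :
    (sg R s i : R) = if s i then -1 else 1 := rfl

def sgU (R : Type*) [Ring R] (s : Fin n → Bool) (i : Fin n) : Rˣ := if s i then -1 else 1

lemma sgU_val (R : Type*) [Ring R] (s : Fin n → Bool) (i : Fin n) :
    ((sgU R s i : Rˣ) : R) = sg R s i := by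
  cases h : s i <;> simp [sgU, sg, h]

lemma sgU_inv (R : Type*) [Ring R] (s : Fin n → Bool) (i : Fin n) :
    (sgU R s i)⁻¹ = sgU R s i := by
  cases h : s i <;> simp [sgU, h]

lemma sg_mul_self (R : Type*) [Ring R] (s : Fin n → Bool) (i : Fin n) :
    (sg R s i : R) * sg R s i = 1 := by
  cases h : s i <;> simp [sg, h]

lemma sum_sign_conj {R : Type*} [Ring R] (w : Matrix (Fin n) (Fin n) R)
    (hdiag : ∀ i, w i i = 0) (i j : Fin n) :
    (∑ s : Fin n → Bool, sg R s i * w i j * sg R s j) = 0 := by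
  rcases eq_or_ne i j with rfl | hij
  · simp [hdiag]
  · refine Finset.sum_involution (fun s _ => Function.update s i (!(s i))) ?_ ?_ ?_ ?_
    · intro s _
      have h1 : (sg R (Function.update s i (!(s i))) i : R) = -(sg R s i) := by
        cases h : s i <;> simp [sg, Function.update_self, h]
      have h2 : (sg R (Function.update s i (!(s i))) j : R) = sg R s j := by
        simp [sg, Function.update_of_ne (Ne.symm hij)]
      rw [h1, h2]
      simp [neg_mul]
    · intro s _ _ h
      have := congrFun h i
      simp [Function.update_self] at this
    · intro s _; exact Finset.mem_univ _
    · intro s _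
      funext t
      rcases eq_or_ne t i with rfl | ht
      · simp [Function.update_self]
      · simp [Function.update_of_ne ht]

end Sign

section Main
variable {n : ℕ} {R : Type*} [Ring R] {J : Ideal R}

lemma prod_one_add {k : ℕ} (hk : 1 ≤ k) :
    ∀ Ms : List (Matrix (Fin n) (Fin n) R),
      (∀ m ∈ Ms, ∀ i j, m i j ∈ JPow J k) →
      ∀ i j, ((Ms.map (fun m => 1 + m)).prod - 1 - Ms.sum) i j ∈ JPow J (k + 1) := by
  intro Ms
  induction Ms with
  | nil => intro _ i j; simpa using (JPow J (k+1)).zero_mem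
  | cons m Ms ih =>
    intro h i j
    have hm : ∀ i j, m i j ∈ JPow J k := h m (by simp)
    have hMs : ∀ m' ∈ Ms, ∀ i j, m' i j ∈ JPow J k := fun m' hm' => h m' (by simp [hm'])
    have ihE := ih hMs
    set P := (Ms.map (fun m => 1 + m)).prod with hP
    set S := Ms.sum with hS
    have hSentry : ∀ i j, S i j ∈ JPow J k := by
      intro i j
      rw [hS, list_sum_apply]
      have : ∀ x ∈ Ms.map (fun m' => m' i j), x ∈ JPow J k := by
        intro x hx
        obtain ⟨m', hm', rfl⟩ := List.mem_map.1 hx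
        exact hMs m' hm' i j
      -- list sum of members
      exact list_sum_mem this
    have key : ((m :: Ms).map (fun m => 1 + m)).prod - 1 - (m :: Ms).sum
        = (P - 1 - S) + m * S + m * (P - 1 - S) := by
      rw [List.map_cons, List.prod_cons, List.sum_cons, ← hP, ← hS]
      noncomm_ring
    rw [key]
    rw [Matrix.add_apply, Matrix.add_apply]
    refine AddSubgroup.add_mem _ (AddSubgroup.add_mem _ (ihE i j) ?_) ?_
    · rw [Matrix.mul_apply]
      refine AddSubgroup.sum_mem _ (fun l _ => ?_)
      exact jpow_le (by omega) (k + k) (by omega) (jpow_mul (hm i l) (hSentry l j))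
    · rw [Matrix.mul_apply]
      refine AddSubgroup.sum_mem _ (fun l _ => ?_)
      exact jpow_le (by omega) (k + (k + 1)) (by omega) (jpow_mul (hm i l) (ihE l j))

end Main

section Main2
variable {n : ℕ} {R : Type*} [Ring R] {J : Ideal R}

lemma sg_mul_mem {k : ℕ} (hk : 1 ≤ k) (s : Fin n → Bool) (i j : Fin n) {x : R}
    (hx : x ∈ JPow J k) : sg R s i * x * sg R s j ∈ JPow J k := by
  have h1 : sg R s i * x ∈ JPow J k := jpow_smul hk _ hx
  cases h : s j
  · rw [sg_def R s j, h, if_neg Bool.false_ne_true, mul_one]; exact h1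
  · rw [sg_def R s j, h, if_pos rfl, mul_neg_one]; exact (JPow J k).neg_mem h1

lemma step {k : ℕ} (hk : 1 ≤ k) (a b : (Matrix (Fin n) (Fin n) R)ˣ)
    (hb : MemSemigroupGen a b)
    (hdiag : ∀ i, b.val i i = 1) (hoff : ∀ i j, i ≠ j → b.val i j ∈ JPow J k) :
    ∃ c : (Matrix (Fin n) (Fin n) R)ˣ, MemSemigroupGen a c ∧
      ∀ i j, (c.val - 1) i j ∈ JPow J (k + 1) := by
  classical
  set w : Matrix (Fin n) (Fin n) R := b.val - 1 with hw
  have hwdiag : ∀ i, w i i = 0 := by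
    intro i; rw [hw, Matrix.sub_apply, hdiag i, Matrix.one_apply_eq, sub_self]
  have hwmem : ∀ i j, w i j ∈ JPow J k := by
    intro i j
    rcases eq_or_ne i j with rfl | hij
    · rw [hwdiag]; exact (JPow J k).zero_mem
    · rw [hw, Matrix.sub_apply, Matrix.one_apply_ne hij, sub_zero]; exact hoff i j hij
  set Ls := (Finset.univ : Finset (Fin n → Bool)).toList with hLs
  set du : (Fin n → Bool) → (Matrix (Fin n) (Fin n) R)ˣ := fun s => unitOfDiag (sgU R s) with hdu
  set c := (Ls.map (fun s => du s * b * (du s)⁻¹)).prod with hc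
  have hLsne : Ls ≠ [] := by
    rw [hLs, Ne, Finset.toList_eq_nil]
    exact Finset.univ_nonempty.ne_empty
  refine ⟨c, ?_, ?_⟩
  · refine memSG_list_prod a _ (by simpa using hLsne) ?_
    intro x hx
    obtain ⟨s, _, rfl⟩ := List.mem_map.1 hx
    refine memSG_mul_diag _ ?_ (memSG_diag_mul _ (unitOfDiag_isDiag _) hb)
    rw [hdu, unitOfDiag_inv]
    exact unitOfDiag_isDiag _
  · have hDgsq : ∀ s : Fin n → Bool,
        (diagonal (sg R s) : Matrix (Fin n) (Fin n) R) * diagonal (sg R s) = 1 := by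
      intro s
      rw [diagonal_mul_diagonal]
      have h1 : (fun i => (sg R s i) * sg R s i) = fun _ => (1 : R) :=
        funext fun i => sg_mul_self R s i
      rw [h1, diagonal_one]
    have hfac : ∀ s, (du s * b * (du s)⁻¹).val
        = 1 + diagonal (sg R s) * w * diagonal (sg R s) := by
      intro s
      have hinv : (du s)⁻¹ = du s := by
        rw [hdu]
        show (unitOfDiag (sgU R s))⁻¹ = unitOfDiag (sgU R s)
        rw [unitOfDiag_inv]
        congr 1
        funext i
        exact sgU_inv R s i
      rw [hinv, Units.val_mul, Units.val_mul, hdu]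
      show (unitOfDiag (sgU R s)).val * b.val * (unitOfDiag (sgU R s)).val = _
      rw [unitOfDiag_val]
      have hdg : (diagonal fun i => ((sgU R s i : Rˣ) : R)) = diagonal (sg R s) := by
        rw [show (fun i => ((sgU R s i : Rˣ) : R)) = sg R s from funext fun i => sgU_val R s i]
      rw [hdg]
      have hbval : b.val = 1 + w := by rw [hw]; abel
      rw [hbval, mul_add, add_mul, mul_one, hDgsq, mul_assoc]
    set Ms : List (Matrix (Fin n) (Fin n) R) :=
      Ls.map (fun s => diagonal (sg R s) * w * diagonal (sg R s)) with hMs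
    have hcval : c.val = (Ms.map (fun m => 1 + m)).prod := by
      rw [hc, units_val_list_prod, List.map_map, hMs, List.map_map]
      congr 1
      refine List.map_congr_left fun s _ => ?_
      exact hfac s
    have hentry : ∀ (s : Fin n → Bool) (i j : Fin n),
        (diagonal (sg R s) * w * diagonal (sg R s)) i j = sg R s i * w i j * sg R s j := by
      intro s i j
      rw [mul_diagonal, diagonal_mul]
    have hMsmem : ∀ m ∈ Ms, ∀ i j, m i j ∈ JPow J k := by
      intro m hm i j
      obtain ⟨s, _, rfl⟩ := List.mem_map.1 hm
      rw [hentry]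
      exact sg_mul_mem hk s i j (hwmem i j)
    have hsum : ∀ i j, Ms.sum i j = 0 := by
      intro i j
      rw [list_sum_apply, hMs, List.map_map]
      have heq : ((fun m => m i j) ∘ fun s => diagonal (sg R s) * w * diagonal (sg R s))
          = fun s => sg R s i * w i j * sg R s j := by
        funext s
        exact hentry s i j
      rw [heq, hLs, Finset.sum_map_toList]
      exact sum_sign_conj w hwdiag i j
    intro i j
    have h0 := prod_one_add (J := J) hk Ms hMsmem i j
    rw [← hcval] at h0
    have heq2 : (c.val - 1) i j = (c.val - 1 - Ms.sum) i j := by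
      rw [Matrix.sub_apply (c.val - 1) Ms.sum, hsum, sub_zero]
    rw [heq2]
    exact h0

lemma normalizeDiag (hnilJ : ∀ x : R, x ∈ J → IsNilpotent x) {k : ℕ} (hk : 1 ≤ k)
    (a b : (Matrix (Fin n) (Fin n) R)ˣ) (hb : MemSemigroupGen a b)
    (h : ∀ i j, (b.val - 1) i j ∈ JPow J k) :
    ∃ b' : (Matrix (Fin n) (Fin n) R)ˣ, MemSemigroupGen a b' ∧
      (∀ i, b'.val i i = 1) ∧ (∀ i j, i ≠ j → b'.val i j ∈ JPow J k) := by
  have hJ1 : ∀ i j, (b.val - 1) i j ∈ J := by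
    intro i j
    exact jpow_one_le (jpow_le le_rfl k hk (h i j))
  have hu : ∀ i, IsUnit (b.val i i) := by
    intro i
    have hnl : IsNilpotent ((b.val - 1) i i) := hnilJ _ (hJ1 i i)
    have h1 := IsNilpotent.isUnit_one_add hnl
    have heq : 1 + (b.val - 1) i i = b.val i i := by
      rw [Matrix.sub_apply, Matrix.one_apply_eq]; abel
    rwa [heq] at h1
  set u : Fin n → Rˣ := fun i => (hu i).unit with hudef
  have huval : ∀ i, (u i : R) = b.val i i := fun i => (hu i).unit_spec
  refine ⟨(unitOfDiag u)⁻¹ * b, ?_, ?_, ?_⟩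
  · refine memSG_diag_mul _ ?_ hb
    rw [unitOfDiag_inv]
    exact unitOfDiag_isDiag _
  · intro i
    rw [Units.val_mul, unitOfDiag_inv, unitOfDiag_val, diagonal_mul, ← huval i]
    exact Units.inv_mul _
  · intro i j hij
    rw [Units.val_mul, unitOfDiag_inv, unitOfDiag_val, diagonal_mul]
    have hmem : b.val i j ∈ JPow J k := by
      have h2 := h i j
      rwa [Matrix.sub_apply, Matrix.one_apply_ne hij, sub_zero] at h2
    exact jpow_smul hk _ hmem
end Main2


theorem one_mem_semigroup_gen_of_congruent_identity_mod_radical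
    {n : ℕ} {R : Type*} [Ring R] [IsArtinianRing R] (hn : 2 ≤ n)
    (J : Ideal R) (hJ : J = Ideal.jacobson (⊥ : Ideal R))
    (N : ℕ) (hnil : ∀ L : List R, (∀ x ∈ L, x ∈ J) → L.length = N → L.prod = 0)
    (a : (Matrix (Fin n) (Fin n) R)ˣ)
    (ha : ∀ i j : Fin n, a.val i j - (1 : Matrix (Fin n) (Fin n) R) i j ∈ J) :
    MemSemigroupGen a 1 := by
  classical
  by_cases hN0 : N = 0
  · subst hN0
    have h10 : (1 : R) = 0 := by simpa using hnil [] (by simp) (by simp)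
    have hsub : Subsingleton R := subsingleton_of_zero_eq_one h10.symm
    have hae : a = 1 := Units.ext (by funext i j; exact Subsingleton.elim _ _)
    rw [← hae]; exact memSG_self a
  · have hN1 : 1 ≤ N := Nat.one_le_iff_ne_zero.2 hN0
    have hnilJ : ∀ x : R, x ∈ J → IsNilpotent x := by
      intro x hx
      refine ⟨N, ?_⟩
      rw [← List.prod_replicate]
      exact hnil _ (fun y hy => (List.eq_of_mem_replicate hy) ▸ hx) (by simp)
    have key : ∀ k, 1 ≤ k → ∃ b, MemSemigroupGen a b ∧ (∀ i, b.val i i = 1) ∧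
        (∀ i j, i ≠ j → b.val i j ∈ JPow J k) := by
      intro k hk
      induction k with
      | zero => omega
      | succ k ih =>
        rcases Nat.eq_or_lt_of_le hk with h1 | h1
        · have hk0 : k = 0 := by omega
          subst hk0
          refine normalizeDiag hnilJ le_rfl a a (memSG_self a) ?_
          intro i j
          rw [Matrix.sub_apply]
          exact mem_jpow_of_mem (ha i j)
        · have hk1 : 1 ≤ k := by omega
          obtain ⟨b, hb, hbd, hbo⟩ := ih hk1
          obtain ⟨c, hc, hcent⟩ := step hk1 a b hb hbd hbo
          exact normalizeDiag hnilJ (by omega) a c hc hcent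
    obtain ⟨b, hb, hbd, hbo⟩ := key N hN1
    have hval : b.val = 1 := by
      funext i j
      rcases eq_or_ne i j with rfl | hij
      · rw [hbd, Matrix.one_apply_eq]
      · rw [Matrix.one_apply_ne hij]
        exact jpow_eq_zero hnil (hbo i j hij)
    have hbe : b = 1 := Units.ext (by rw [hval]; rfl)
    rwa [hbe] at hb
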